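/- Let (A, m) be a Noetherian local ring and I an m-primary m-full ideal. Then there exists an ideal I' ⊇ I having the strong Rees property with μ(I') = μ(I). -/

import Mathlib

open IsLocalRing

/-- `mu I` is the minimal number of generators of the ideal `I`. -/
noncomputable def mu {A : Type*} [CommRing A] (I : Ideal A) : ℕ :=
  sInf {n | ∃ s : Finset A, s.card = n ∧ Ideal.span (s : Set A) = I}

/-!
By Nakayama, `μ(J) = ℓ(J/𝔪J)`. For `I ⊆ J`, computing `ℓ(A/𝔪I)` along `𝔪I ⊆ 𝔪J ⊆ J` and along
`𝔪I ⊆ I ⊆ J` gives `μ(J) + ℓ(𝔪J/𝔪I) = μ(I) + ℓ(J/I)`, where `ℓ(J/I) < ∞` as `I` is `𝔪`-primary.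
Multiplication by `x` embeds `J/I` into `𝔪J/𝔪I` because `(𝔪I : x) = I`, so `μ(J) ≤ μ(I)`.
An ideal `I' ⊇ I` maximal with `μ(I') = μ(I)`, which exists since `A` is Noetherian, then has the
strong Rees property.
-/

namespace Module

variable {R M : Type*} [Ring R] [AddCommGroup M] [Module R M]

theorem length_quotient_eq_add {N P : Submodule R M} (h : N ≤ P) :
    length R (M ⧸ N) = length R (P.map N.mkQ) + length R (M ⧸ P) := by
  rw [length_eq_add_of_exact _ _ (Submodule.injective_subtype _) (Submodule.mkQ_surjective _)
    (LinearMap.exact_subtype_mkQ (P.map N.mkQ)),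
    (Submodule.quotientQuotientEquivQuotient N P h).length_eq]

theorem length_le_of_injective_of_map_le {N : Type*} [AddCommGroup N] [Module R N]
    {f : M →ₗ[R] N} (hf : Function.Injective f) {S : Submodule R M} {T : Submodule R N}
    (h : S.map f ≤ T) : length R S ≤ length R T := by
  rw [(Submodule.equivMapOfInjective f hf S).length_eq, length_submodule, length_submodule]
  exact Order.height_mono h

end Module

theorem mu_eq_spanFinrank {A : Type*} [CommRing A] (I : Ideal A) : mu I = I.spanFinrank := by
  rw [mu, Submodule.spanFinrank_eq_iInf, iInf]
  congr 1
  ext n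
  simp only [Set.mem_ofPred_eq, Set.mem_range, Subtype.exists, exists_prop, and_comm]

namespace IsLocalRing

theorem spanFinrank_eq_length {R M : Type*} [CommRing R] [IsLocalRing R]
    [AddCommGroup M] [Module R M] {N : Submodule R M} (hN : N.FG) :
    (N.spanFinrank : ℕ∞) = Module.length R (N.map (maximalIdeal R • N).mkQ) := by
  let : Field (R ⧸ maximalIdeal R) := Ideal.Quotient.field _
  have : Module.Finite R N := Module.Finite.iff_fg.mpr hN
  have : Module.Finite (R ⧸ maximalIdeal R) (N ⧸ maximalIdeal R • (⊤ : Submodule R N)) :=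
    Module.Finite.of_restrictScalars_finite R _ _
  have hker : maximalIdeal R • (⊤ : Submodule R N) =
      LinearMap.ker ((maximalIdeal R • N).mkQ ∘ₗ N.subtype) := by
    ext y
    simp [Submodule.mem_smul_top_iff]
  have hrange : LinearMap.range ((maximalIdeal R • N).mkQ ∘ₗ N.subtype) =
      N.map (maximalIdeal R • N).mkQ := by
    rw [LinearMap.range_comp, Submodule.range_subtype]
  rw [spanFinrank_eq_finrank_quotient N hN, ← Module.length_eq_finrank,
    ← Module.length_eq_of_surjective (S := R) (M := N ⧸ maximalIdeal R • (⊤ : Submodule R N))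
      Ideal.Quotient.mk_surjective]
  exact ((Submodule.quotEquivOfEq _ _ hker).trans
    ((LinearMap.quotKerEquivRange _).trans (LinearEquiv.ofEq _ _ hrange))).length_eq

theorem isArtinianRing_quotient_of_maximalIdeal_pow_le {A : Type*} [CommRing A]
    [IsNoetherianRing A] [IsLocalRing A] {I : Ideal A} {k : ℕ} (h : maximalIdeal A ^ k ≤ I) :
    IsArtinianRing (A ⧸ I) := by
  rcases eq_or_ne I ⊤ with rfl | hI
  · infer_instance
  have : Nontrivial (A ⧸ I) := Ideal.Quotient.nontrivial_iff.mpr hI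
  have := of_surjective' (Ideal.Quotient.mk I) Ideal.Quotient.mk_surjective
  rw [isArtinianRing_iff_isNilpotent_maximalIdeal]
  refine ⟨k, ?_⟩
  rwa [← map_maximalIdeal_of_surjective _ Ideal.Quotient.mk_surjective, Ideal.zero_eq_bot,
    ← Ideal.map_pow, Ideal.map_eq_bot_iff_le_ker, Ideal.mk_ker]

theorem length_quotient_ne_top_of_maximalIdeal_pow_le {A : Type*} [CommRing A]
    [IsNoetherianRing A] [IsLocalRing A] {I : Ideal A} {k : ℕ} (h : maximalIdeal A ^ k ≤ I) :
    Module.length A (A ⧸ I) ≠ ⊤ := by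
  have := isArtinianRing_quotient_of_maximalIdeal_pow_le h
  rw [Module.length_eq_of_surjective (R := A ⧸ I) Ideal.Quotient.mk_surjective]
  exact Module.length_ne_top

end IsLocalRing

theorem Ideal.length_map_mkQ_le_of_colon_eq {A : Type*} [CommRing A] {𝔞 I J : Ideal A}
    {x : A} (hx : x ∈ 𝔞) (hcolon : (𝔞 * I).colon (Ideal.span {x}) = I) :
    Module.length A (Submodule.map I.mkQ J) ≤
      Module.length A (Submodule.map (𝔞 * I).mkQ (𝔞 * J)) := by
  have hcomap : Submodule.comap (LinearMap.mulLeft A x) (𝔞 * I) = I := by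
    ext a
    rw [Submodule.mem_comap, LinearMap.mulLeft_apply, mul_comm x a,
      ← Ideal.mem_colon_span_singleton, hcolon]
  let φ := I.mapQ (𝔞 * I) (LinearMap.mulLeft A x) hcomap.ge
  have hφ : Function.Injective φ := by
    rw [← LinearMap.ker_eq_bot, Submodule.ker_mapQ, hcomap, Submodule.mkQ_map_self]
  refine Module.length_le_of_injective_of_map_le hφ ?_
  rw [← Submodule.map_comp, Submodule.mapQ_mkQ, Submodule.map_comp]
  refine Submodule.map_mono ?_
  rintro _ ⟨a, ha, rfl⟩
  exact Ideal.mul_mem_mul hx ha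

section

variable {A : Type*} [CommRing A] [IsNoetherianRing A] [IsLocalRing A]

theorem mu_eq_length (J : Ideal A) :
    (mu J : ℕ∞) = Module.length A (Submodule.map (maximalIdeal A * J).mkQ J) := by
  rw [mu_eq_spanFinrank, spanFinrank_eq_length (IsNoetherian.noetherian J), Ideal.smul_eq_mul]

theorem mu_le_mu_of_le {I J : Ideal A} (hIJ : I ≤ J) {k : ℕ} (hk : maximalIdeal A ^ k ≤ I)
    {x : A} (hx : x ∈ maximalIdeal A)
    (hcolon : (maximalIdeal A * I).colon (Ideal.span {x}) = I) :
    mu J ≤ mu I := by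
  set m := maximalIdeal A
  have key : (mu J : ℕ∞) + Module.length A (A ⧸ I) ≤ mu I + Module.length A (A ⧸ I) :=
    calc (mu J : ℕ∞) + Module.length A (A ⧸ I)
        = mu J + Module.length A (Submodule.map I.mkQ J) + Module.length A (A ⧸ J) := by
          rw [Module.length_quotient_eq_add hIJ, add_assoc]
      _ ≤ mu J + Module.length A (Submodule.map (m * I).mkQ (m * J)) +
            Module.length A (A ⧸ J) := by
          gcongr
          exact Ideal.length_map_mkQ_le_of_colon_eq hx hcolon
      _ = Module.length A (Submodule.map (m * I).mkQ (m * J)) + Module.length A (A ⧸ m * J) := by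
          rw [mu_eq_length, Module.length_quotient_eq_add (Ideal.mul_le_right : m * J ≤ J)]
          ring
      _ = Module.length A (A ⧸ m * I) :=
          (Module.length_quotient_eq_add (Ideal.mul_mono_right hIJ)).symm
      _ = mu I + Module.length A (A ⧸ I) := by
          rw [Module.length_quotient_eq_add Ideal.mul_le_right, mu_eq_length]
  exact_mod_cast
    (ENat.add_le_add_iff_right (length_quotient_ne_top_of_maximalIdeal_pow_le hk)).mp key

end

theorem exists_le_forall_lt_of_forall_le {α : Type*} [Preorder α] [WellFoundedGT α]
    {f : α → ℕ} {a : α} (h : ∀ b, a ≤ b → f b ≤ f a) :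
    ∃ a', a ≤ a' ∧ (∀ b, a' < b → f b < f a') ∧ f a' = f a := by
  obtain ⟨a', ⟨ha', hfa'⟩, hmax⟩ :=
    (wellFounded_gt (α := α)).has_min {b | a ≤ b ∧ f b = f a} ⟨a, le_rfl, rfl⟩
  refine ⟨a', ha', fun b hb => ?_, hfa'⟩
  have hab : a ≤ b := ha'.trans hb.le
  exact hfa' ▸ (h b hab).lt_of_ne fun hfb => hmax b ⟨hab, hfb⟩ hb

theorem stmt4_general {A : Type*} [CommRing A] [IsNoetherianRing A] [IsLocalRing A]
    (I : Ideal A) (hprimary : ∃ k : ℕ, maximalIdeal A ^ k ≤ I)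
    (hfull : ∃ x ∈ maximalIdeal A, (maximalIdeal A * I).colon (Ideal.span {x}) = I) :
    ∃ I' : Ideal A, I ≤ I' ∧ (∀ J : Ideal A, I' < J → mu J < mu I') ∧ mu I' = mu I := by
  obtain ⟨k, hk⟩ := hprimary
  obtain ⟨x, hx, hcolon⟩ := hfull
  exact exists_le_forall_lt_of_forall_le fun _ hIJ => mu_le_mu_of_le hIJ hk hx hcolon

/-- For any `m`-primary `m`-full ideal `I` there is an ideal `I' ⊇ I` with the
strong Rees property and `μ(I') = μ(I)`. -/
theorem stmt4 {A : Type*} [CommRing A] [IsNoetherianRing A] [IsLocalRing A]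
    (I : Ideal A) (hIm : I ≤ maximalIdeal A) (hprimary : ∃ k : ℕ, maximalIdeal A ^ k ≤ I)
    (hfull : ∃ x ∈ maximalIdeal A, (maximalIdeal A * I).colon (Ideal.span {x}) = I) :
    ∃ I' : Ideal A, I ≤ I' ∧ (∀ J : Ideal A, I' < J → mu J < mu I') ∧ mu I' = mu I :=
  stmt4_general I hprimary hfull
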